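/- Let f = x₁·(x₁x₂ + x₃² + x₄²) ∈ ℝ[x₁,x₂,x₃,x₄]. Then the rank of f over ℝ is exactly 7, and the Waring rank of f over ℝ is exactly 7. -/

import Mathlib

/-- A tensor of format `n × n × n` is symmetric if its entries are unchanged under
every permutation of the three indices. -/
def IsSymTensor {K : Type*} [Field K] {n : ℕ} (T : Fin n → Fin n → Fin n → K) : Prop :=
  ∀ (σ : Equiv.Perm (Fin 3)) (v : Fin 3 → Fin n),
    T (v (σ 0)) (v (σ 1)) (v (σ 2)) = T (v 0) (v 1) (v 2)

/-- The rank of an `n × n × n` tensor over `K`: the least `r` admitting a decomposition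
into `r` rank-one terms. -/
noncomputable def tensorRank {K : Type*} [Field K] {n : ℕ}
    (T : Fin n → Fin n → Fin n → K) : ℕ :=
  sInf {r : ℕ | ∃ u v w : Fin r → Fin n → K,
    ∀ i j k, T i j k = ∑ s, u s i * v s j * w s k}

/-- The symmetric rank of an `n × n × n` tensor over `K`. -/
noncomputable def symTensorRank {K : Type*} [Field K] {n : ℕ}
    (T : Fin n → Fin n → Fin n → K) : ℕ :=
  sInf {r : ℕ | ∃ (lam : Fin r → K) (u : Fin r → Fin n → K),
    ∀ i j k, T i j k = ∑ s, lam s * (u s i * u s j * u s k)}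

open MvPolynomial in
/-- The Waring rank over `ℝ` of a polynomial in four variables: the least `r` such that
`f` is a linear combination of `r` cubes of linear forms. -/
noncomputable def waringRank (f : MvPolynomial (Fin 4) ℝ) : ℕ :=
  sInf {r : ℕ | ∃ (lam : Fin r → ℝ) (l : Fin r → Fin 4 → ℝ),
    f = ∑ s, C (lam s) * (∑ i, C (l s i) * X i) ^ 3}

open MvPolynomial in
/-- The rank over `ℝ` of a cubic `f`: the tensor rank of the unique symmetric
`4 × 4 × 4` tensor `T` with `f = ∑ T i j k · xᵢ xⱼ xₖ`. -/
noncomputable def cubicRank (f : MvPolynomial (Fin 4) ℝ) : ℕ :=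
  sInf {r : ℕ | ∃ T : Fin 4 → Fin 4 → Fin 4 → ℝ, IsSymTensor T ∧
    f = (∑ i, ∑ j, ∑ k, C (T i j k) * X i * X j * X k) ∧ tensorRank T ≤ r}

/-!
Write `f = x₀(x₀x₁ + x₂² + x₃²)`. A seven-term Waring decomposition of `f` gives both upper
bounds, and by polarization its symmetric tensor `T` is the only one representing `f`, so every
Waring decomposition of `f` is a tensor decomposition of `T`. For the lower bound, contract the
first slot of `T` with `y`: the slice `T(y)` is invertible as soon as `y₀ ≠ 0` (its determinant is
`-y₀⁴/81`), while a decomposition `T = ∑ₛ uₛ ⊗ vₛ ⊗ wₛ` gives `rank T(y) ≤ #{s | ⟨uₛ, y⟩ ≠ 0}`.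
No nonzero `y` is orthogonal to all the `uₛ` (else `T(y) = 0`), so Gaussian elimination produces
`y` with `y₀ ≠ 0` orthogonal to three of them, whence `4 ≤ r - 3`.
-/

open Finset Matrix MvPolynomial

section Substitution

variable {K : Type*} [Field K] {n r : ℕ}

def contractFirst (T : Fin n → Fin n → Fin n → K) (y : Fin n → K) : Matrix (Fin n) (Fin n) K :=
  Matrix.of fun j k => ∑ i, y i * T i j k

theorem contractFirst_eq_mul_diagonal_mul {T : Fin n → Fin n → Fin n → K}
    (u v w : Fin r → Fin n → K) (hT : ∀ i j k, T i j k = ∑ s, u s i * v s j * w s k)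
    (y : Fin n → K) :
    contractFirst T y = (Matrix.of v)ᵀ * diagonal (fun s => u s ⬝ᵥ y) * Matrix.of w := by
  ext j k
  simp only [contractFirst, hT, of_apply, mul_apply, transpose_apply, diagonal_apply, mul_ite,
    mul_zero, sum_ite_eq', mem_univ, if_true, dotProduct, Finset.mul_sum, Finset.sum_mul]
  rw [Finset.sum_comm]
  exact sum_congr rfl fun s _ => sum_congr rfl fun i _ => by ring

theorem rank_contractFirst_le [DecidableEq K] {T : Fin n → Fin n → Fin n → K}
    (u v w : Fin r → Fin n → K) (hT : ∀ i j k, T i j k = ∑ s, u s i * v s j * w s k)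
    (y : Fin n → K) : (contractFirst T y).rank ≤ #{s | u s ⬝ᵥ y ≠ 0} := by
  rw [contractFirst_eq_mul_diagonal_mul u v w hT]
  calc _ ≤ ((Matrix.of v)ᵀ * diagonal fun s => u s ⬝ᵥ y).rank := rank_mul_le_left _ _
    _ ≤ (diagonal fun s => u s ⬝ᵥ y).rank := rank_mul_le_right _ _
    _ = #{s | u s ⬝ᵥ y ≠ 0} := by rw [rank_diagonal, Fintype.card_subtype]

/-- A nonzero `x` orthogonal to `c` and to the `u s` already orthogonal to `y` exists by counting
dimensions; some `u s` is not orthogonal to `x`, and moving `y` along `x` makes it orthogonal. -/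
theorem exists_dotProduct_ne_zero_card_zeros_lt [DecidableEq K] {u : Fin r → Fin n → K}
    (hu : ∀ y, (∀ s, u s ⬝ᵥ y = 0) → y = 0) {c y : Fin n → K} (hy : c ⬝ᵥ y ≠ 0)
    (hZ : #{s | u s ⬝ᵥ y = 0} + 1 < n) :
    ∃ y', c ⬝ᵥ y' ≠ 0 ∧ #{s | u s ⬝ᵥ y = 0} < #{s | u s ⬝ᵥ y' = 0} := by
  set Z : Finset (Fin r) := {s | u s ⬝ᵥ y = 0}
  let A : Matrix (Option Z) (Fin n) K := Matrix.of fun o => o.elim c fun s => u s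
  have hdim : Module.finrank K (Option Z → K) < Module.finrank K (Fin n → K) := by
    simpa [Module.finrank_fintype_fun_eq_card] using hZ
  obtain ⟨x, hxA, hx0⟩ := Submodule.exists_mem_ne_zero_of_ne_bot
    (LinearMap.ker_ne_bot_of_finrank_lt (f := A.mulVecLin) hdim)
  have hcx : c ⬝ᵥ x = 0 := congrFun (LinearMap.mem_ker.mp hxA) none
  have hZx : ∀ s ∈ Z, u s ⬝ᵥ x = 0 := fun s hs =>
    congrFun (LinearMap.mem_ker.mp hxA) (some ⟨s, hs⟩)
  obtain ⟨s, hs⟩ : ∃ s, u s ⬝ᵥ x ≠ 0 := by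
    by_contra! h
    exact hx0 (hu x h)
  refine ⟨y - (u s ⬝ᵥ y / u s ⬝ᵥ x) • x, by simpa [dotProduct_sub, hcx] using hy, ?_⟩
  refine card_lt_card ⟨fun t ht => ?_, fun hsub => ?_⟩
  · have hxt := hZx t ht
    simp only [Z, mem_filter, mem_univ, true_and] at ht ⊢
    simp [dotProduct_sub, ht, hxt]
  · have : s ∈ Z := hsub (by simp [dotProduct_sub, div_mul_cancel₀ _ hs])
    exact hs (hZx s this)

theorem exists_dotProduct_ne_zero_le_card_zeros [DecidableEq K] {u : Fin r → Fin n → K}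
    (hu : ∀ y, (∀ s, u s ⬝ᵥ y = 0) → y = 0) {c : Fin n → K} (hc : c ≠ 0) :
    ∃ y, c ⬝ᵥ y ≠ 0 ∧ n ≤ #{s | u s ⬝ᵥ y = 0} + 1 := by
  suffices h : ∀ m, m < n → ∃ y, c ⬝ᵥ y ≠ 0 ∧ m ≤ #{s | u s ⬝ᵥ y = 0} by
    obtain _ | n := n
    · exact absurd (Subsingleton.elim c 0) hc
    obtain ⟨y, hy, hm⟩ := h n n.lt_succ_self
    exact ⟨y, hy, by omega⟩
  intro m hm
  induction m with
  | zero =>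
    obtain ⟨i, hi⟩ := Function.ne_iff.mp hc
    exact ⟨Pi.single i 1, by simpa using hi, Nat.zero_le _⟩
  | succ m ih =>
    obtain ⟨y, hy, hmy⟩ := ih (by omega)
    by_cases hlt : m + 1 ≤ #{s | u s ⬝ᵥ y = 0}
    · exact ⟨y, hy, hlt⟩
    obtain ⟨y', hy', hlt'⟩ := exists_dotProduct_ne_zero_card_zeros_lt hu hy (by omega)
    exact ⟨y', hy', by omega⟩

theorem add_le_of_decomposition [DecidableEq K] {T : Fin n → Fin n → Fin n → K}
    (u v w : Fin r → Fin n → K) (hT : ∀ i j k, T i j k = ∑ s, u s i * v s j * w s k)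
    (hconcise : ∀ y, contractFirst T y = 0 → y = 0) {c : Fin n → K} (hc : c ≠ 0) {m : ℕ}
    (hm : ∀ y, c ⬝ᵥ y ≠ 0 → m ≤ (contractFirst T y).rank) : n + m ≤ r + 1 := by
  have hu : ∀ y, (∀ s, u s ⬝ᵥ y = 0) → y = 0 := fun y hy =>
    hconcise y (by simp [contractFirst_eq_mul_diagonal_mul u v w hT, hy])
  obtain ⟨y, hcy, hzeros⟩ := exists_dotProduct_ne_zero_le_card_zeros hu hc
  have hrank := (hm y hcy).trans (rank_contractFirst_le u v w hT y)
  have hsplit : #{s | u s ⬝ᵥ y = 0} + #{s | u s ⬝ᵥ y ≠ 0} = r := by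
    simpa using card_filter_add_card_filter_not (s := univ) fun s => u s ⬝ᵥ y = 0
  omega

end Substitution

section SymmetricTensor

variable {K : Type*} [Field K] {n r : ℕ}

def cubicForm (T : Fin n → Fin n → Fin n → K) (y : Fin n → K) : K :=
  ∑ i, ∑ j, ∑ k, T i j k * y i * y j * y k

theorem IsSymTensor.apply_swap_left {T : Fin n → Fin n → Fin n → K} (hT : IsSymTensor T)
    (a b c : Fin n) : T b a c = T a b c := by
  simpa [Equiv.swap_apply_of_ne_of_ne] using hT (Equiv.swap 0 1) ![a, b, c]

theorem IsSymTensor.apply_swap_right {T : Fin n → Fin n → Fin n → K} (hT : IsSymTensor T)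
    (a b c : Fin n) : T a c b = T a b c := by
  simpa [Equiv.swap_apply_of_ne_of_ne] using hT (Equiv.swap 1 2) ![a, b, c]

theorem IsSymTensor.polarization {T : Fin n → Fin n → Fin n → K} (hT : IsSymTensor T)
    (p q t : Fin n) :
    let e : Fin n → Fin n → K := fun i => Pi.single i 1
    cubicForm T (e p + e q + e t) - cubicForm T (e p + e q) - cubicForm T (e p + e t)
      - cubicForm T (e q + e t) + cubicForm T (e p) + cubicForm T (e q) + cubicForm T (e t)
      = 6 * T p q t := by
  intro e
  have expand : ∀ a b c : Fin n → K,
      cubicForm T (a + b + c) - cubicForm T (a + b) - cubicForm T (a + c) - cubicForm T (b + c)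
        + cubicForm T a + cubicForm T b + cubicForm T c
      = ∑ i, ∑ j, ∑ k, T i j k * (a i * b j * c k + a i * c j * b k + b i * a j * c k
          + b i * c j * a k + c i * a j * b k + c i * b j * a k) := by
    intro a b c
    simp only [cubicForm, ← sum_add_distrib, ← sum_sub_distrib]
    exact sum_congr rfl fun i _ => sum_congr rfl fun j _ => sum_congr rfl fun k _ => by
      simp only [Pi.add_apply]; ring
  rw [expand]
  simp only [e, Pi.single_apply, mul_ite, mul_one, mul_zero, mul_add, sum_add_distrib, sum_ite_eq',
    mem_univ, if_true]
  linear_combination 2 * hT.apply_swap_right p q t + 3 * hT.apply_swap_left p q t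
    + 2 * hT.apply_swap_right q p t + hT.apply_swap_left p t q + hT.apply_swap_left q t p

theorem IsSymTensor.ext_of_cubicForm (h6 : (6 : K) ≠ 0) {T T' : Fin n → Fin n → Fin n → K}
    (hT : IsSymTensor T) (hT' : IsSymTensor T') (h : ∀ y, cubicForm T y = cubicForm T' y) :
    T = T' := by
  funext p q t
  apply mul_left_cancel₀ h6
  rw [← hT.polarization, ← hT'.polarization]
  simp only [h]

def cubeSumTensor (lam : Fin r → K) (l : Fin r → Fin n → K) : Fin n → Fin n → Fin n → K :=
  fun i j k => ∑ s, lam s * (l s i * l s j * l s k)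

theorem isSymTensor_cubeSumTensor (lam : Fin r → K) (l : Fin r → Fin n → K) :
    IsSymTensor (cubeSumTensor lam l) := by
  intro σ v
  refine sum_congr rfl fun s _ => ?_
  have h := Equiv.prod_comp σ fun t => l s (v t)
  rw [Fin.prod_univ_three, Fin.prod_univ_three] at h
  rw [h]

theorem cubeSumTensor_apply (lam : Fin r → K) (l : Fin r → Fin n → K) (i j k : Fin n) :
    cubeSumTensor lam l i j k = ∑ s, (lam s • l s) i * l s j * l s k :=
  sum_congr rfl fun s _ => by simp only [Pi.smul_apply, smul_eq_mul]; ring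

theorem cubicForm_cubeSumTensor (lam : Fin r → K) (l : Fin r → Fin n → K) (y : Fin n → K) :
    cubicForm (cubeSumTensor lam l) y = ∑ s, lam s * (l s ⬝ᵥ y) ^ 3 := by
  have hcomm : cubicForm (cubeSumTensor lam l) y
      = ∑ s, ∑ i, ∑ j, ∑ k, lam s * (l s i * l s j * l s k) * y i * y j * y k := by
    simp only [cubicForm, cubeSumTensor, sum_mul]
    symm
    rw [Finset.sum_comm]
    refine Finset.sum_congr rfl fun i _ => ?_
    rw [Finset.sum_comm]
    exact Finset.sum_congr rfl fun j _ => Finset.sum_comm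
  rw [hcomm]
  refine sum_congr rfl fun s _ => ?_
  simp only [dotProduct, pow_succ, pow_zero, one_mul, sum_mul, mul_sum]
  exact sum_congr rfl fun i _ => sum_congr rfl fun j _ => sum_congr rfl fun k _ => by ring

theorem eval_cubicPoly (T : Fin n → Fin n → Fin n → K)
    (y : Fin n → K) : eval y (∑ i, ∑ j, ∑ k, C (T i j k) * X i * X j * X k) = cubicForm T y := by
  simp [cubicForm, map_sum]

theorem eval_sum_cubes (lam : Fin r → K) (l : Fin r → Fin n → K)
    (y : Fin n → K) :
    eval y (∑ s, C (lam s) * (∑ i, C (l s i) * X i) ^ 3) = cubicForm (cubeSumTensor lam l) y := by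
  simp [cubicForm_cubeSumTensor, dotProduct, map_sum]

end SymmetricTensor

section ReducibleCubic

noncomputable def waringWeights : Fin 7 → ℝ := ![1/6, 1/6, 1/6, 1/6, 1/162, -1/162, -1/81]

def waringForms : Fin 7 → Fin 4 → ℝ :=
  ![![1, 0, 1, 0], ![1, 0, -1, 0], ![1, 0, 0, 1], ![1, 0, 0, -1],
    ![1, 3, 0, 0], ![5, -3, 0, 0], ![-2, 3, 0, 0]]

theorem reducibleCubic_eq_sum_cubes :
    (X 0 * (X 0 * X 1 + X 2 ^ 2 + X 3 ^ 2) : MvPolynomial (Fin 4) ℝ)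
      = ∑ s, C (waringWeights s) * (∑ i, C (waringForms s i) * X i) ^ 3 := by
  refine MvPolynomial.funext fun y => ?_
  simp [waringWeights, waringForms, Fin.sum_univ_succ]
  ring

noncomputable def reducibleCubicTensor : Fin 4 → Fin 4 → Fin 4 → ℝ :=
  cubeSumTensor waringWeights waringForms

theorem eq_reducibleCubicTensor {T : Fin 4 → Fin 4 → Fin 4 → ℝ} (hT : IsSymTensor T)
    (h : ∀ y, cubicForm T y = eval y (X 0 * (X 0 * X 1 + X 2 ^ 2 + X 3 ^ 2))) :
    T = reducibleCubicTensor :=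
  hT.ext_of_cubicForm (by norm_num) (isSymTensor_cubeSumTensor _ _) fun y => by
    rw [h, reducibleCubicTensor, ← eval_sum_cubes, ← reducibleCubic_eq_sum_cubes]

theorem contractFirst_reducibleCubicTensor (y : Fin 4 → ℝ) :
    contractFirst reducibleCubicTensor y = (1 / 3 : ℝ) •
      !![y 1, y 0, y 2, y 3; y 0, 0, 0, 0; y 2, 0, y 0, 0; y 3, 0, 0, y 0] := by
  ext j k
  fin_cases j <;> fin_cases k <;>
    simp [contractFirst, reducibleCubicTensor, cubeSumTensor, waringWeights, waringForms,
      Fin.sum_univ_succ] <;> ring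

theorem rank_contractFirst_reducibleCubicTensor {y : Fin 4 → ℝ} (hy : y 0 ≠ 0) :
    (contractFirst reducibleCubicTensor y).rank = 4 := by
  have hdet : (contractFirst reducibleCubicTensor y).det = -y 0 ^ 4 / 81 := by
    rw [contractFirst_reducibleCubicTensor, det_smul]
    simp [det_succ_row_zero, Fin.sum_univ_succ, Fin.succAbove]
    ring
  rw [rank_of_isUnit _ ((isUnit_iff_isUnit_det _).mpr (by simp [hdet, hy])), Fintype.card_fin]

theorem seven_le_of_reducibleCubicTensor_eq {r : ℕ} (u v w : Fin r → Fin 4 → ℝ)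
    (h : ∀ i j k, reducibleCubicTensor i j k = ∑ s, u s i * v s j * w s k) : 7 ≤ r := by
  have hconcise : ∀ y, contractFirst reducibleCubicTensor y = 0 → y = 0 := by
    intro y hy
    rw [contractFirst_reducibleCubicTensor, smul_eq_zero, or_iff_right (by norm_num)] at hy
    ext i
    fin_cases i
    exacts [congrFun₂ hy 1 0, congrFun₂ hy 0 0, congrFun₂ hy 0 2, congrFun₂ hy 0 3]
  have := add_le_of_decomposition u v w h hconcise (c := Pi.single 0 1) (by simp) (m := 4)
    fun y hy => (rank_contractFirst_reducibleCubicTensor (by simpa using hy)).ge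
  omega

theorem tensorRank_reducibleCubicTensor : tensorRank reducibleCubicTensor = 7 :=
  IsLeast.csInf_eq ⟨⟨_, _, _, cubeSumTensor_apply waringWeights waringForms⟩,
    fun _ ⟨u, v, w, h⟩ => seven_le_of_reducibleCubicTensor_eq u v w h⟩

theorem reducibleCubic_eq_cubicPoly :
    (X 0 * (X 0 * X 1 + X 2 ^ 2 + X 3 ^ 2) : MvPolynomial (Fin 4) ℝ)
      = ∑ i, ∑ j, ∑ k, C (reducibleCubicTensor i j k) * X i * X j * X k :=
  MvPolynomial.funext fun y => by
    rw [eval_cubicPoly, reducibleCubicTensor, ← eval_sum_cubes, ← reducibleCubic_eq_sum_cubes]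

end ReducibleCubic

open MvPolynomial in
/-- The cubic surface `x₁(x₁x₂ + x₃² + x₄²)` has real rank seven and real Waring rank
seven. -/
theorem real_rank_of_reducible_cubic :
    cubicRank (X 0 * (X 0 * X 1 + X 2 ^ 2 + X 3 ^ 2) : MvPolynomial (Fin 4) ℝ) = 7 ∧
    waringRank (X 0 * (X 0 * X 1 + X 2 ^ 2 + X 3 ^ 2) : MvPolynomial (Fin 4) ℝ) = 7 := by
  have hsym : IsSymTensor reducibleCubicTensor := isSymTensor_cubeSumTensor _ _
  refine ⟨IsLeast.csInf_eq ⟨⟨_, hsym, reducibleCubic_eq_cubicPoly,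
      tensorRank_reducibleCubicTensor.le⟩, ?_⟩,
    IsLeast.csInf_eq ⟨⟨_, _, reducibleCubic_eq_sum_cubes⟩, ?_⟩⟩
  · rintro r ⟨T, hT, hf, hr⟩
    rwa [eq_reducibleCubicTensor hT fun y => by rw [hf, eval_cubicPoly],
      tensorRank_reducibleCubicTensor] at hr
  · rintro r ⟨lam, l, hf⟩
    have hT := eq_reducibleCubicTensor (isSymTensor_cubeSumTensor lam l) fun y => by
      rw [hf, eval_sum_cubes]
    exact seven_le_of_reducibleCubicTensor_eq _ _ _ (hT ▸ cubeSumTensor_apply lam l)
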